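/- arXiv:gr-qc/0405080 — 4 statements merged into one kernel-verified Lean document; each statement's English description precedes it below -/
import Mathlib

section
/- Let φ, κ, β_i, γ̃_ij, A_ij be smooth fields on ℝ × ℝ³ satisfying the linearized BSSN evolution equations (E1) and (E4). Then at every point of ℝ × ℝ³, ∂_t(∂_l∂_j γ̃_lj − 8Δφ) = −2 ∂_i M_i, where M_i := ∂_l A_il − (2/3)∂_i κ is the momentum constraint quantity. In particular, if M_i = 0 everywhere then the Hamiltonian constraint quantity ∂_l∂_j γ̃_lj − 8Δφ is independent of time. -/
noncomputable section

/-- Spacetime ℝ × ℝ³. -/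
abbrev Spc : Type := ℝ × (Fin 3 → ℝ)

/-- Time derivative ∂_t. -/
noncomputable def pt (f : Spc → ℝ) : Spc → ℝ :=
  fun p => deriv (fun s => f (s, p.2)) p.1

/-- Spatial partial derivative ∂_i. -/
noncomputable def ps (i : Fin 3) (f : Spc → ℝ) : Spc → ℝ :=
  fun p => deriv (fun s => f (p.1, Function.update p.2 i s)) (p.2 i)

/-- Spatial Laplacian Δ = Σ_i ∂_i ∂_i. -/
noncomputable def lap (f : Spc → ℝ) : Spc → ℝ :=
  fun p => ∑ i : Fin 3, ps i (ps i f) p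

/-- Kronecker delta δ_ij. -/
noncomputable def kron (i j : Fin 3) : ℝ := if i = j then 1 else 0

/-!
`∂_t` and the `∂_i` act on smooth functions as directional derivatives `p ↦ fderiv ℝ f p v`,
so they are linear and commute by symmetry of second derivatives. Commuting `∂_t` past
`∂_l∂_j` and substituting (E1) and (E4), the shift vector enters only through
`Δ(∂_l β_l)`, with total coefficient `2 - 2/3 - 8/6 = 0`; what is left is
`-2 ∂_l∂_j A_lj + (4/3) Δκ = -2 ∂_i M_i`. When `M = 0` the time derivative of the
Hamiltonian constraint vanishes, so it is constant along each time line.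
-/

open scoped ContDiff

section DirectionalDerivative

variable {E : Type*} [NormedAddCommGroup E] [NormedSpace ℝ E]

def IsDirDeriv (D : (E → ℝ) → E → ℝ) (v : E) : Prop :=
  ∀ f : E → ℝ, ContDiff ℝ ∞ f → D f = fun p => fderiv ℝ f p v

namespace IsDirDeriv

variable {D D' : (E → ℝ) → E → ℝ} {v w : E} {f g : E → ℝ}

theorem contDiff (hD : IsDirDeriv D v) (hf : ContDiff ℝ ∞ f) : ContDiff ℝ ∞ (D f) := by
  rw [hD f hf]
  exact (hf.fderiv_right (m := ∞) le_rfl).clm_apply contDiff_const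

theorem add (hD : IsDirDeriv D v) (hf : ContDiff ℝ ∞ f) (hg : ContDiff ℝ ∞ g) :
    D (fun p => f p + g p) = fun p => D f p + D g p := by
  rw [hD _ (hf.add hg), hD f hf, hD g hg]
  funext p
  rw [fderiv_fun_add (hf.differentiable (by simp) p) (hg.differentiable (by simp) p)]
  rfl

theorem sub (hD : IsDirDeriv D v) (hf : ContDiff ℝ ∞ f) (hg : ContDiff ℝ ∞ g) :
    D (fun p => f p - g p) = fun p => D f p - D g p := by
  rw [hD _ (hf.sub hg), hD f hf, hD g hg]
  funext p
  rw [fderiv_fun_sub (hf.differentiable (by simp) p) (hg.differentiable (by simp) p)]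
  rfl

theorem const_mul (hD : IsDirDeriv D v) (c : ℝ) (hf : ContDiff ℝ ∞ f) :
    D (fun p => c * f p) = fun p => c * D f p := by
  rw [hD _ (contDiff_const.mul hf), hD f hf]
  funext p
  rw [fderiv_const_mul (hf.differentiable (by simp) p)]
  rfl

theorem sum {ι : Type*} {s : Finset ι} {F : ι → E → ℝ} (hD : IsDirDeriv D v)
    (hF : ∀ i ∈ s, ContDiff ℝ ∞ (F i)) :
    D (fun p => ∑ i ∈ s, F i p) = fun p => ∑ i ∈ s, D (F i) p := by
  rw [hD _ (ContDiff.sum hF)]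
  funext p
  rw [fderiv_fun_sum fun i hi => (hF i hi).differentiable (by simp) p,
    FunLike.coe_sum, Finset.sum_apply]
  exact Finset.sum_congr rfl fun i hi => by rw [hD _ (hF i hi)]

theorem comm (hD : IsDirDeriv D v) (hD' : IsDirDeriv D' w) (hf : ContDiff ℝ ∞ f) :
    D (D' f) = D' (D f) := by
  rw [hD _ (hD'.contDiff hf), hD' _ (hD.contDiff hf), hD' f hf, hD f hf]
  funext p
  have hdf : DifferentiableAt ℝ (fderiv ℝ f) p :=
    (hf.fderiv_right (m := ∞) le_rfl).differentiable (by simp) p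
  simp only [fderiv_clm_apply hdf (differentiableAt_const _), fderiv_const_apply,
    ContinuousLinearMap.comp_zero, zero_add, ContinuousLinearMap.flip_apply]
  exact (hf.contDiffAt.isSymmSndFDerivAt (by simp [ENat.LEInfty.out])).eq v w

end IsDirDeriv

theorem isDirDeriv_of_hasDerivAt {D : (E → ℝ) → E → ℝ} {v : E} (c : E → ℝ → E) (t : E → ℝ)
    (hc : ∀ p, HasDerivAt (c p) v (t p)) (hct : ∀ p, c p (t p) = p)
    (hD : ∀ f p, D f p = deriv (fun s => f (c p s)) (t p)) : IsDirDeriv D v := by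
  intro f hf
  funext p
  have h := ((hf.differentiable (by simp) (c p (t p))).hasFDerivAt.comp_hasDerivAt
    (t p) (hc p)).deriv
  rw [hct] at h
  rw [hD, ← h]
  rfl

end DirectionalDerivative

theorem isDirDeriv_pt : IsDirDeriv pt ((1, 0) : Spc) :=
  isDirDeriv_of_hasDerivAt (fun p s => (s, p.2)) Prod.fst
    (fun p => (hasDerivAt_id p.1).prodMk (hasDerivAt_const _ _)) (fun _ => rfl) (fun _ _ => rfl)

theorem isDirDeriv_ps (i : Fin 3) : IsDirDeriv (ps i) ((0, Pi.single i 1) : Spc) :=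
  isDirDeriv_of_hasDerivAt (fun p s => (p.1, Function.update p.2 i s)) (fun p => p.2 i)
    (fun p => (hasDerivAt_const _ _).prodMk (hasDerivAt_update p.2 i (p.2 i)))
    (fun p => by simp) (fun _ _ => rfl)

@[fun_prop]
theorem contDiff_ps (i : Fin 3) {f : Spc → ℝ} (hf : ContDiff ℝ ∞ f) : ContDiff ℝ ∞ (ps i f) :=
  (isDirDeriv_ps i).contDiff hf

theorem ps_comm (i j : Fin 3) {f : Spc → ℝ} (hf : ContDiff ℝ ∞ f) :
    ps i (ps j f) = ps j (ps i f) :=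
  (isDirDeriv_ps i).comm (isDirDeriv_ps j) hf

theorem pt_ps_comm (i : Fin 3) {f : Spc → ℝ} (hf : ContDiff ℝ ∞ f) :
    pt (ps i f) = ps i (pt f) :=
  isDirDeriv_pt.comm (isDirDeriv_ps i) hf

def spatialDiv (β : Fin 3 → Spc → ℝ) : Spc → ℝ := fun p => ∑ l, ps l (β l) p

@[fun_prop]
theorem contDiff_spatialDiv {β : Fin 3 → Spc → ℝ} (hβ : ∀ i, ContDiff ℝ ∞ (β i)) :
    ContDiff ℝ ∞ (spatialDiv β) := by
  unfold spatialDiv; fun_prop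

@[fun_prop]
theorem contDiff_lap {f : Spc → ℝ} (hf : ContDiff ℝ ∞ f) : ContDiff ℝ ∞ (lap f) := by
  unfold lap; fun_prop

theorem pt_hamiltonian {γ : Fin 3 → Fin 3 → Spc → ℝ} {φ : Spc → ℝ}
    (hγ : ∀ i j, ContDiff ℝ ∞ (γ i j)) (hφ : ContDiff ℝ ∞ φ) :
    pt (fun p => (∑ l, ∑ j, ps l (ps j (γ l j)) p) - 8 * lap φ p) =
      fun p => (∑ l, ∑ j, ps l (ps j (pt (γ l j))) p) - 8 * lap (pt φ) p := by
  simp (disch := fun_prop) only [lap, isDirDeriv_pt.sub, isDirDeriv_pt.const_mul,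
    isDirDeriv_pt.sum, pt_ps_comm]

theorem sum_ps_ps_ps_left {β : Fin 3 → Spc → ℝ} (hβ : ∀ i, ContDiff ℝ ∞ (β i)) (p : Spc) :
    ∑ l, ∑ j, ps l (ps j (ps l (β j))) p = lap (spatialDiv β) p := by
  have h : ∀ l j, ps l (ps j (ps l (β j))) = ps l (ps l (ps j (β j))) :=
    fun l j => congrArg (ps l) (ps_comm j l (hβ j))
  unfold lap spatialDiv
  simp (disch := fun_prop) only [h, (isDirDeriv_ps _).sum]

theorem sum_ps_ps_ps_right {β : Fin 3 → Spc → ℝ} (hβ : ∀ i, ContDiff ℝ ∞ (β i)) (p : Spc) :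
    ∑ l, ∑ j, ps l (ps j (ps j (β l))) p = lap (spatialDiv β) p := by
  have h : ∀ l j, ps l (ps j (ps j (β l))) = ps j (ps j (ps l (β l))) := fun l j => by
    rw [ps_comm l j (contDiff_ps j (hβ l)), ps_comm l j (hβ l)]
  rw [Finset.sum_comm]
  unfold lap spatialDiv
  simp (disch := fun_prop) only [h, (isDirDeriv_ps _).sum]

theorem sum_sum_kron_mul (g : Fin 3 → Fin 3 → ℝ) : ∑ i, ∑ j, kron i j * g i j = ∑ i, g i i := by
  simp [kron]

theorem sum_ps_ps_evolution_gamma {A : Fin 3 → Fin 3 → Spc → ℝ} {β : Fin 3 → Spc → ℝ}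
    (hA : ∀ i j, ContDiff ℝ ∞ (A i j)) (hβ : ∀ i, ContDiff ℝ ∞ (β i)) (p : Spc) :
    ∑ l, ∑ j, ps l (ps j (fun p => -2 * A l j p + ps l (β j) p + ps j (β l) p
        - (2/3) * kron l j * spatialDiv β p)) p =
      -2 * ∑ l, ∑ j, ps l (ps j (A l j)) p + (4/3) * lap (spatialDiv β) p := by
  simp (disch := fun_prop) only [(isDirDeriv_ps _).add, (isDirDeriv_ps _).sub,
    (isDirDeriv_ps _).const_mul, Finset.sum_add_distrib, Finset.sum_sub_distrib,
    ← Finset.mul_sum, sum_ps_ps_ps_left hβ, sum_ps_ps_ps_right hβ, mul_assoc, sum_sum_kron_mul]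
  simp only [lap]
  ring

theorem lap_linear_combination (a b : ℝ) {f g : Spc → ℝ} (hf : ContDiff ℝ ∞ f)
    (hg : ContDiff ℝ ∞ g) (p : Spc) :
    lap (fun p => a * f p + b * g p) p = a * lap f p + b * lap g p := by
  simp (disch := fun_prop) only [lap, (isDirDeriv_ps _).add, (isDirDeriv_ps _).const_mul,
    Finset.sum_add_distrib, Finset.mul_sum]

theorem sum_ps_momentum {A : Fin 3 → Fin 3 → Spc → ℝ} {κ : Spc → ℝ}
    (hA : ∀ i j, ContDiff ℝ ∞ (A i j)) (hκ : ContDiff ℝ ∞ κ) (p : Spc) :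
    ∑ i, ps i (fun p => (∑ l, ps l (A i l) p) - (2/3) * ps i κ p) p =
      ∑ i, ∑ l, ps i (ps l (A i l)) p - (2/3) * lap κ p := by
  simp (disch := fun_prop) only [lap, (isDirDeriv_ps _).sub, (isDirDeriv_ps _).const_mul,
    (isDirDeriv_ps _).sum, Finset.sum_sub_distrib, Finset.mul_sum]

theorem eq_of_pt_eq_zero {f : Spc → ℝ} (hf : Differentiable ℝ f) (h : ∀ p, pt f p = 0)
    (t₁ t₂ : ℝ) (x : Fin 3 → ℝ) : f (t₁, x) = f (t₂, x) :=
  is_const_of_deriv_eq_zero (hf.comp (differentiable_id.prodMk (differentiable_const x)))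
    (fun t => h (t, x)) t₁ t₂

theorem hamiltonian_constraint_evolution_gamma_general
    (φ κ : Spc → ℝ) (β : Fin 3 → Spc → ℝ)
    (γ A : Fin 3 → Fin 3 → Spc → ℝ)
    (hφ : ContDiff ℝ (⊤ : ℕ∞) φ) (hκ : ContDiff ℝ (⊤ : ℕ∞) κ)
    (hβ : ∀ i, ContDiff ℝ (⊤ : ℕ∞) (β i))
    (hγ : ∀ i j, ContDiff ℝ (⊤ : ℕ∞) (γ i j)) (hA : ∀ i j, ContDiff ℝ (⊤ : ℕ∞) (A i j))
    (E1 : ∀ p, pt φ p = -(1/6) * κ p + (1/6) * ∑ l, ps l (β l) p)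
    (E4 : ∀ i j p, pt (γ i j) p =
      -2 * A i j p + ps i (β j) p + ps j (β i) p
        - (2/3) * kron i j * ∑ l, ps l (β l) p)
    (M : Fin 3 → Spc → ℝ)
    (hM : ∀ i, M i = fun p => (∑ l, ps l (A i l) p) - (2/3) * ps i κ p)
    (H : Spc → ℝ)
    (hH : H = fun p => (∑ l, ∑ j, ps l (ps j (γ l j)) p) - 8 * lap φ p) :
    (∀ p, pt H p = -2 * ∑ i, ps i (M i) p) ∧
      ((∀ i p, M i p = 0) → ∀ t₁ t₂ : ℝ, ∀ x : Fin 3 → ℝ, H (t₁, x) = H (t₂, x)) := by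
  have hptφ : pt φ = fun p => -(1/6) * κ p + (1/6) * spatialDiv β p := funext E1
  have hptγ : ∀ i j, pt (γ i j) = fun p => -2 * A i j p + ps i (β j) p + ps j (β i) p
      - (2/3) * kron i j * spatialDiv β p := fun i j => funext (E4 i j)
  have evolution (p : Spc) : pt H p = -2 * ∑ i, ps i (M i) p := by
    simp only [hH, pt_hamiltonian hγ hφ, hptγ, hptφ, hM, sum_ps_ps_evolution_gamma hA hβ,
      lap_linear_combination _ _ hκ (contDiff_spatialDiv hβ), sum_ps_momentum hA hκ]
    ring
  have hH_smooth : ContDiff ℝ ∞ H := by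
    subst hH; fun_prop
  refine ⟨evolution, fun hM0 => eq_of_pt_eq_zero (hH_smooth.differentiable (by simp)) fun p => ?_⟩
  have hM0' : ∀ i, M i = fun _ => 0 := fun i => funext (hM0 i)
  simp [evolution, hM0', ps]

/-- If (E1) and (E4) hold, then `∂_t(∂_l∂_j γ̃_lj − 8Δφ) = −2 ∂_i M_i`; in particular,
if the momentum constraint `M_i = 0` holds everywhere, the Hamiltonian constraint
quantity `∂_l∂_j γ̃_lj − 8Δφ` is independent of time. -/
theorem hamiltonian_constraint_evolution_gamma
    (φ κ : Spc → ℝ) (β : Fin 3 → Spc → ℝ)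
    (γ A : Fin 3 → Fin 3 → Spc → ℝ)
    (hφ : ContDiff ℝ (⊤ : ℕ∞) φ) (hκ : ContDiff ℝ (⊤ : ℕ∞) κ)
    (hβ : ∀ i, ContDiff ℝ (⊤ : ℕ∞) (β i))
    (hγ : ∀ i j, ContDiff ℝ (⊤ : ℕ∞) (γ i j)) (hA : ∀ i j, ContDiff ℝ (⊤ : ℕ∞) (A i j))
    (hγsym : ∀ i j, γ i j = γ j i) (hAsym : ∀ i j, A i j = A j i)
    (E1 : ∀ p, pt φ p = -(1/6) * κ p + (1/6) * ∑ l, ps l (β l) p)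
    (E4 : ∀ i j p, pt (γ i j) p =
      -2 * A i j p + ps i (β j) p + ps j (β i) p
        - (2/3) * kron i j * ∑ l, ps l (β l) p)
    (M : Fin 3 → Spc → ℝ)
    (hM : ∀ i, M i = fun p => (∑ l, ps l (A i l) p) - (2/3) * ps i κ p)
    (H : Spc → ℝ)
    (hH : H = fun p => (∑ l, ∑ j, ps l (ps j (γ l j)) p) - 8 * lap φ p) :
    (∀ p, pt H p = -2 * ∑ i, ps i (M i) p) ∧
      ((∀ i p, M i p = 0) → ∀ t₁ t₂ : ℝ, ∀ x : Fin 3 → ℝ, H (t₁, x) = H (t₂, x)) :=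
  hamiltonian_constraint_evolution_gamma_general φ κ β γ A hφ hκ hβ hγ hA E1 E4 M hM H hH
end
end

section
/- Let φ, κ, β_i, Γ_i be smooth fields on ℝ × ℝ³ satisfying the linearized BSSN evolution equations (E1) and (E6). Then at every point of ℝ × ℝ³, ∂_t(∂_l Γ_l − 8Δφ) = 0; that is, the Hamiltonian constraint quantity ∂_l Γ_l − 8Δφ is independent of time. -/
noncomputable section

/-! On the submodule of smooth functions (where `lineDeriv` is additive), `∂_t` and the spatial
`∂_i` are pairwise commuting linear maps, and this is all the argument uses. Commuting `∂_t` past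
the spatial derivatives and substituting (E1) and (E6), the `κ`-terms cancel because
`8 · 1/6 = 4/3`, and the `β`-terms cancel because `∂_l Δβ_l = Δ ∂_l β_l`, leaving
`(1/3 + 1 - 8/6) Δ (∂_l β_l) = 0`. A function on a line with vanishing derivative is constant,
which gives time independence. -/

open scoped ContDiff

theorem map_divergence_sub_eight_laplacian_eq_zero {V ι : Type*} [AddCommGroup V] [Module ℝ V]
    [Fintype ι] (D₀ : Module.End ℝ V) (D : ι → Module.End ℝ V)
    (hD₀ : ∀ i, Commute D₀ (D i)) (hD : ∀ i j, Commute (D i) (D j))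
    (φ κ : V) (β Γ : ι → V)
    (E1 : D₀ φ = -(1/6 : ℝ) • κ + (1/6 : ℝ) • ∑ l, D l (β l))
    (E6 : ∀ i, D₀ (Γ i) = -(4/3 : ℝ) • D i κ + (1/3 : ℝ) • D i (∑ l, D l (β l))
      + ∑ j, D j (D j (β i))) :
    D₀ (∑ l, D l (Γ l) - (8 : ℝ) • ∑ j, D j (D j φ)) = 0 := by
  set Δ : Module.End ℝ V := ∑ j, D j * D j
  have Δ_apply (x : V) : Δ x = ∑ j, D j (D j x) := by simp [Δ, LinearMap.sum_apply]
  have commute_Δ (T : Module.End ℝ V) (hT : ∀ i, Commute T (D i)) : Commute T Δ :=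
    Commute.sum_right _ _ _ fun i _ => (hT i).mul_right (hT i)
  simp only [← Δ_apply] at E6 ⊢
  have map_divergence (x : ι → V) : D₀ (∑ l, D l (x l)) = ∑ l, D l (D₀ (x l)) := by
    simp only [map_sum, ← Module.End.mul_apply, (hD₀ _).eq]
  have divergence_laplacian : ∑ l, D l (Δ (β l)) = Δ (∑ l, D l (β l)) := by
    simp only [map_sum, ← Module.End.mul_apply, (commute_Δ _ (hD _)).eq]
  rw [map_sub, map_smul, map_divergence, ← Module.End.mul_apply, (commute_Δ D₀ hD₀).eq,
    Module.End.mul_apply]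
  simp only [E1, E6, map_add, map_smul, Finset.sum_add_distrib, ← Finset.smul_sum,
    divergence_laplacian, ← Δ_apply]
  module

variable {E : Type*} [NormedAddCommGroup E] [NormedSpace ℝ E]

theorem ContDiff.lineDeriv_eq_fderiv {f : E → ℝ} (hf : ContDiff ℝ ∞ f) (x v : E) :
    lineDeriv ℝ f x v = fderiv ℝ f x v :=
  (hf.differentiable (by simp) x).lineDeriv_eq_fderiv

theorem ContDiff.lineDeriv {f : E → ℝ} (hf : ContDiff ℝ ∞ f) (v : E) :
    ContDiff ℝ ∞ (fun x => lineDeriv ℝ f x v) := by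
  simp_rw [hf.lineDeriv_eq_fderiv]
  exact (hf.fderiv_right (m := ∞) le_rfl).clm_apply contDiff_const

theorem lineDeriv_lineDeriv_comm {f : E → ℝ} (hf : ContDiff ℝ ∞ f) (x v w : E) :
    lineDeriv ℝ (fun y => lineDeriv ℝ f y w) x v =
      lineDeriv ℝ (fun y => lineDeriv ℝ f y v) x w := by
  have lineDeriv_lineDeriv (u : E) :
      lineDeriv ℝ (fun y => lineDeriv ℝ f y u) x = fun v => fderiv ℝ (fderiv ℝ f) x v u := by
    ext v
    rw [(hf.lineDeriv u).lineDeriv_eq_fderiv]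
    simp_rw [hf.lineDeriv_eq_fderiv]
    rw [fderiv_clm_apply ((hf.fderiv_right (m := ∞) le_rfl).differentiable (by simp) x)
      (differentiableAt_const u)]
    simp
  rw [lineDeriv_lineDeriv, lineDeriv_lineDeriv]
  exact (hf.contDiffAt.isSymmSndFDerivAt (by simpa using ENat.LEInfty.out)).eq v w

variable (E) in
def smoothFunctions : Submodule ℝ (E → ℝ) where
  carrier := {f | ContDiff ℝ ∞ f}
  add_mem' {f g} (hf : ContDiff ℝ ∞ f) (hg : ContDiff ℝ ∞ g) := hf.add hg
  zero_mem' := (contDiff_const : ContDiff ℝ ∞ fun _ : E => (0 : ℝ))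
  smul_mem' _ f (hf : ContDiff ℝ ∞ f) := contDiff_const.smul hf

namespace smoothFunctions

theorem mem_iff {f : E → ℝ} : f ∈ smoothFunctions E ↔ ContDiff ℝ ∞ f := Iff.rfl

theorem contDiff (f : smoothFunctions E) : ContDiff ℝ ∞ (f : E → ℝ) := mem_iff.1 f.2

def lineDerivEnd (v : E) : Module.End ℝ (smoothFunctions E) where
  toFun f := ⟨fun x => lineDeriv ℝ f x v, mem_iff.2 ((contDiff f).lineDeriv v)⟩
  map_add' f g := by
    ext x
    simp only [Submodule.coe_add, Pi.add_apply]
    rw [ContDiff.lineDeriv_eq_fderiv (f := (f : E → ℝ) + (g : E → ℝ))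
        ((contDiff f).add (contDiff g)),
      (contDiff f).lineDeriv_eq_fderiv, (contDiff g).lineDeriv_eq_fderiv,
      fderiv_add ((contDiff f).differentiable (by simp) x)
        ((contDiff g).differentiable (by simp) x)]
    rfl
  map_smul' c f := by
    ext x
    simp [lineDeriv, deriv_const_mul_field]

@[simp]
theorem coe_lineDerivEnd (v : E) (f : smoothFunctions E) :
    (lineDerivEnd v f : E → ℝ) = fun x => lineDeriv ℝ f x v := rfl

theorem commute_lineDerivEnd (v w : E) : Commute (lineDerivEnd v) (lineDerivEnd w) := by
  ext f x
  exact lineDeriv_lineDeriv_comm (contDiff f) x v w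

end smoothFunctions

theorem pt_eq_lineDeriv (f : Spc → ℝ) : pt f = fun p => lineDeriv ℝ f p (1, 0) := by
  ext p
  rw [lineDeriv, pt, ← zero_add p.1, ← deriv_comp_add_const]
  congr 1
  ext t
  congr 1
  ext <;> simp [add_comm]

theorem ps_eq_lineDeriv (i : Fin 3) (f : Spc → ℝ) :
    ps i f = fun p => lineDeriv ℝ f p (0, Pi.single i 1) := by
  ext p
  rw [lineDeriv, ps, ← zero_add (p.2 i), ← deriv_comp_add_const]
  congr 1
  ext t
  congr 1
  ext j
  · simp
  · by_cases h : j = i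
    · subst h; simp [add_comm]
    · simp [h]

/-- If (E1) and (E6) hold, then `∂_t(∂_l Γ_l − 8Δφ) = 0`, i.e. the Hamiltonian
constraint quantity `∂_l Γ_l − 8Δφ` is independent of time. -/
theorem hamiltonian_constraint_evolution_Gamma
    (φ κ : Spc → ℝ) (β Γ : Fin 3 → Spc → ℝ)
    (hφ : ContDiff ℝ (⊤ : ℕ∞) φ) (hκ : ContDiff ℝ (⊤ : ℕ∞) κ)
    (hβ : ∀ i, ContDiff ℝ (⊤ : ℕ∞) (β i)) (hΓ : ∀ i, ContDiff ℝ (⊤ : ℕ∞) (Γ i))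
    (E1 : ∀ p, pt φ p = -(1/6) * κ p + (1/6) * ∑ l, ps l (β l) p)
    (E6 : ∀ i p, pt (Γ i) p =
      -(4/3) * ps i κ p + (1/3) * ps i (fun q => ∑ l, ps l (β l) q) p + lap (β i) p)
    (H : Spc → ℝ)
    (hH : H = fun p => (∑ l, ps l (Γ l) p) - 8 * lap φ p) :
    (∀ p, pt H p = 0) ∧
      (∀ t₁ t₂ : ℝ, ∀ x : Fin 3 → ℝ, H (t₁, x) = H (t₂, x)) := by
  let D₀ := smoothFunctions.lineDerivEnd ((1, 0) : Spc)
  let D (i : Fin 3) := smoothFunctions.lineDerivEnd ((0, Pi.single i 1) : Spc)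
  let Φ : smoothFunctions Spc := ⟨φ, hφ⟩
  let K : smoothFunctions Spc := ⟨κ, hκ⟩
  let B (i : Fin 3) : smoothFunctions Spc := ⟨β i, hβ i⟩
  let G (i : Fin 3) : smoothFunctions Spc := ⟨Γ i, hΓ i⟩
  simp only [lap, pt_eq_lineDeriv, ps_eq_lineDeriv] at E1 E6 hH
  have E1' : D₀ Φ = -(1/6 : ℝ) • K + (1/6 : ℝ) • ∑ l, D l (B l) := by
    ext p; simp [D₀, D, Φ, K, B, E1]
  have E6' (i : Fin 3) : D₀ (G i) = -(4/3 : ℝ) • D i K + (1/3 : ℝ) • D i (∑ l, D l (B l))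
      + ∑ j, D j (D j (B i)) := by
    ext p; simp [D₀, D, K, B, G, E6, Finset.sum_fn, -map_sum]
  have hH' : H = (∑ l, D l (G l) - (8 : ℝ) • ∑ j, D j (D j Φ) : smoothFunctions Spc) := by
    rw [hH]; ext p; simp [D, Φ, G]
  have pt_H (p : Spc) : pt H p = 0 := by
    have conserved := map_divergence_sub_eight_laplacian_eq_zero D₀ D
      (fun _ => smoothFunctions.commute_lineDerivEnd _ _)
      (fun _ _ => smoothFunctions.commute_lineDerivEnd _ _) Φ K B G E1' E6'
    rw [pt_eq_lineDeriv, hH']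
    exact congrFun (congrArg Subtype.val conserved) p
  refine ⟨pt_H, fun t₁ t₂ x => ?_⟩
  have hH_smooth : ContDiff ℝ ∞ H := hH' ▸ smoothFunctions.contDiff _
  exact is_const_of_deriv_eq_zero
    ((hH_smooth.differentiable (by simp)).comp (differentiable_id.prodMk (differentiable_const x)))
    (fun t => pt_H (t, x)) t₁ t₂
end
end

section
/- Let n, m, l ∈ ℝ³ be an orthonormal triple, let A_ij be a smooth field of symmetric trace-free 3×3 matrices on ℝ³, and κ a smooth scalar field on ℝ³. Define the scalar fields A1 = 2A_ij n_(i m_j), A2 = 2A_ij n_(i l_j), A3 = 2A_ij l_(i m_j), A4 = (1/2)A_ij(l_i l_j − m_i m_j), A5 = (1/6)A_ij(2n_i n_j − l_i l_j − m_i m_j), and let ∂_n f := n_i ∂_i f, ∂_m f := m_i ∂_i f, ∂_l f := l_i ∂_i f denote directional derivatives. Then the momentum constraint quantity M_i := ∂_l A_il − (2/3)∂_i κ satisfies, for each i: M_i = [ (1/2)∂_m A1 + (1/2)∂_l A2 + 2∂_n A5 − (2/3)∂_n κ ] n_i + [ (1/2)∂_n A1 + (1/2)∂_l A3 − ∂_m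 A4 − ∂_m A5 − (2/3)∂_m κ ] m_i + [ (1/2)∂_n A2 + (1/2)∂_m A3 + ∂_l A4 − ∂_l A5 − (2/3)∂_l κ ] l_i. -/
noncomputable section
open Matrix


/-- Spatial partial derivative ∂_i on ℝ³. -/
noncomputable def d (i : Fin 3) (f : (Fin 3 → ℝ) → ℝ) : (Fin 3 → ℝ) → ℝ :=
  fun x => deriv (fun s => f (Function.update x i s)) (x i)

/-- Directional derivative ∂_v f = v_i ∂_i f. -/
noncomputable def dirD (v : Fin 3 → ℝ) (f : (Fin 3 → ℝ) → ℝ) : (Fin 3 → ℝ) → ℝ :=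
  fun x => ∑ i, v i * d i f x

/-- Symmetrized product v_(i w_j) = (1/2)(v_i w_j + v_j w_i). -/
def symp (v w : Fin 3 → ℝ) (i j : Fin 3) : ℝ := (1/2) * (v i * w j + v j * w i)



lemma hasD {f : (Fin 3 → ℝ) → ℝ} (hf : ContDiff ℝ (⊤ : ℕ∞) f) (a : Fin 3) (x : Fin 3 → ℝ) :
    HasDerivAt (fun s => f (Function.update x a s)) (d a f x) (x a) := by
  have : DifferentiableAt ℝ (fun s => f (Function.update x a s)) (x a) :=
    ((hf.comp (contDiff_update _ x a)).differentiable (by simp)).differentiableAt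
  exact this.hasDerivAt

lemma d_comb (A : Fin 3 → Fin 3 → (Fin 3 → ℝ) → ℝ)
    (hA : ∀ p q, ContDiff ℝ (⊤ : ℕ∞) (A p q)) (c : ℝ) (w : Fin 3 → Fin 3 → ℝ)
    (a : Fin 3) (x : Fin 3 → ℝ) :
    d a (fun y => c * ∑ p, ∑ q, A p q y * w p q) x
      = c * ∑ p, ∑ q, d a (A p q) x * w p q := by
  have h : HasDerivAt (fun s => c * ∑ p, ∑ q, A p q (Function.update x a s) * w p q)
      (c * ∑ p, ∑ q, d a (A p q) x * w p q) (x a) := by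
    refine HasDerivAt.const_mul c ?_
    refine HasDerivAt.fun_sum fun p _ => ?_
    refine HasDerivAt.fun_sum fun q _ => ?_
    exact (hasD (hA p q) a x).mul_const _
  exact h.deriv

lemma d_trace (A : Fin 3 → Fin 3 → (Fin 3 → ℝ) → ℝ)
    (hA : ∀ p q, ContDiff ℝ (⊤ : ℕ∞) (A p q)) (hAtr : ∀ x, ∑ i, A i i x = 0)
    (a : Fin 3) (x : Fin 3 → ℝ) :
    ∑ p, d a (A p p) x = 0 := by
  have h : HasDerivAt (fun s => ∑ p, A p p (Function.update x a s))
      (∑ p, d a (A p p) x) (x a) := by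
    refine HasDerivAt.fun_sum fun p _ => ?_
    exact hasD (hA p p) a x
  have h0 : (fun s => ∑ p, A p p (Function.update x a s)) = fun _ => (0:ℝ) := by
    funext s; exact hAtr _
  rw [h0] at h
  have := h.deriv
  simpa using this.symm

lemma completeness (n m l : Fin 3 → ℝ)
    (hn : ∑ i, n i * n i = 1) (hm : ∑ i, m i * m i = 1) (hl : ∑ i, l i * l i = 1)
    (hnm : ∑ i, n i * m i = 0) (hnl : ∑ i, n i * l i = 0) (hml : ∑ i, m i * l i = 0) :
    ∀ p q, n p * n q + m p * m q + l p * l q = if p = q then (1:ℝ) else 0 := by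
  have h1 : (Matrix.of ![n, m, l]) * (Matrix.of ![n, m, l])ᵀ = 1 := by
    ext p q
    simp only [Fin.sum_univ_three] at hn hm hl hnm hnl hml
    fin_cases p <;> fin_cases q <;>
      simp [Matrix.mul_apply, Matrix.transpose_apply, Fin.sum_univ_three, Matrix.one_apply,
        Matrix.vecHead, Matrix.vecTail, Function.comp] <;>
      first
      | linear_combination hn | linear_combination hm | linear_combination hl
      | linear_combination hnm | linear_combination hnl | linear_combination hml
  have h2 : (Matrix.of ![n, m, l])ᵀ * (Matrix.of ![n, m, l]) = 1 :=
    mul_eq_one_comm.mp h1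
  intro p q
  have h3 := congrFun (congrFun h2 p) q
  simp only [Matrix.mul_apply, Matrix.transpose_apply, Fin.sum_univ_three, Matrix.one_apply,
    Matrix.of_apply] at h3
  simpa [Matrix.cons_val_zero, Matrix.cons_val_one] using h3

/-- The momentum constraint quantity `M_i = ∂_l A_il − (2/3)∂_i κ` written in terms
of directional derivatives of the five scalar components A1,…,A5 of the symmetric
trace-free field A with respect to the orthonormal triple (n,m,l). -/
theorem momentum_constraint_frame_decomposition
    (n m l : Fin 3 → ℝ)
    (hn : ∑ i, n i * n i = 1) (hm : ∑ i, m i * m i = 1) (hl : ∑ i, l i * l i = 1)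
    (hnm : ∑ i, n i * m i = 0) (hnl : ∑ i, n i * l i = 0) (hml : ∑ i, m i * l i = 0)
    (A : Fin 3 → Fin 3 → (Fin 3 → ℝ) → ℝ) (κ : (Fin 3 → ℝ) → ℝ)
    (hA : ∀ i j, ContDiff ℝ (⊤ : ℕ∞) (A i j)) (hκ : ContDiff ℝ (⊤ : ℕ∞) κ)
    (hAsym : ∀ i j, A i j = A j i) (hAtr : ∀ x, ∑ i, A i i x = 0)
    (A1 A2 A3 A4 A5 : (Fin 3 → ℝ) → ℝ)
    (hA1 : A1 = fun x => 2 * ∑ i, ∑ j, A i j x * symp n m i j)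
    (hA2 : A2 = fun x => 2 * ∑ i, ∑ j, A i j x * symp n l i j)
    (hA3 : A3 = fun x => 2 * ∑ i, ∑ j, A i j x * symp l m i j)
    (hA4 : A4 = fun x => (1/2) * ∑ i, ∑ j, A i j x * (l i * l j - m i * m j))
    (hA5 : A5 = fun x => (1/6) * ∑ i, ∑ j, A i j x * (2 * n i * n j - l i * l j - m i * m j))
    (M : Fin 3 → (Fin 3 → ℝ) → ℝ)
    (hM : ∀ i, M i = fun x => (∑ a, d a (A i a) x) - (2/3) * d i κ x) :
    ∀ i x, M i x =
      ((1/2) * dirD m A1 x + (1/2) * dirD l A2 x + 2 * dirD n A5 x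
          - (2/3) * dirD n κ x) * n i
      + ((1/2) * dirD n A1 x + (1/2) * dirD l A3 x - dirD m A4 x
          - dirD m A5 x - (2/3) * dirD m κ x) * m i
      + ((1/2) * dirD n A2 x + (1/2) * dirD m A3 x + dirD l A4 x
          - dirD l A5 x - (2/3) * dirD l κ x) * l i := by
  intro i x
  have hC := completeness n m l hn hm hl hnm hnl hml
  have h00 : n 0 * n 0 + m 0 * m 0 + l 0 * l 0 = 1 := by simpa using hC 0 0
  have h01 : n 0 * n 1 + m 0 * m 1 + l 0 * l 1 = 0 := by simpa using hC 0 1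
  have h02 : n 0 * n 2 + m 0 * m 2 + l 0 * l 2 = 0 := by simpa using hC 0 2
  have h11 : n 1 * n 1 + m 1 * m 1 + l 1 * l 1 = 1 := by simpa using hC 1 1
  have h12 : n 1 * n 2 + m 1 * m 2 + l 1 * l 2 = 0 := by simpa using hC 1 2
  have h22 : n 2 * n 2 + m 2 * m 2 + l 2 * l 2 = 1 := by simpa using hC 2 2
  have e1 : ∀ a, d a A1 x = 2 * ∑ p, ∑ q, d a (A p q) x * symp n m p q := fun a => by
    rw [hA1]; exact d_comb A hA 2 (symp n m) a x
  have e2 : ∀ a, d a A2 x = 2 * ∑ p, ∑ q, d a (A p q) x * symp n l p q := fun a => by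
    rw [hA2]; exact d_comb A hA 2 (symp n l) a x
  have e3 : ∀ a, d a A3 x = 2 * ∑ p, ∑ q, d a (A p q) x * symp l m p q := fun a => by
    rw [hA3]; exact d_comb A hA 2 (symp l m) a x
  have e4 : ∀ a, d a A4 x
      = (1/2) * ∑ p, ∑ q, d a (A p q) x * (l p * l q - m p * m q) := fun a => by
    rw [hA4]; exact d_comb A hA (1/2) (fun p q => l p * l q - m p * m q) a x
  have e5 : ∀ a, d a A5 x
      = (1/6) * ∑ p, ∑ q, d a (A p q) x * (2 * n p * n q - l p * l q - m p * m q) := fun a => by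
    rw [hA5]; exact d_comb A hA (1/6) (fun p q => 2 * n p * n q - l p * l q - m p * m q) a x
  have etr : ∀ a, ∑ p, d a (A p p) x = 0 := fun a => d_trace A hA hAtr a x
  have t22 : ∀ a, d a (A 2 2) x = -d a (A 0 0) x - d a (A 1 1) x := fun a => by
    have h := etr a; rw [Fin.sum_univ_three] at h; linarith
  have s10 : ∀ a, d a (A 1 0) x = d a (A 0 1) x := fun a => by rw [hAsym 1 0]
  have s20 : ∀ a, d a (A 2 0) x = d a (A 0 2) x := fun a => by rw [hAsym 2 0]
  have s21 : ∀ a, d a (A 2 1) x = d a (A 1 2) x := fun a => by rw [hAsym 2 1]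
  have hcase : i = 0 ∨ i = 1 ∨ i = 2 := by omega
  rcases hcase with rfl | rfl | rfl
  ·
    rw [hM]
    simp only [dirD, Fin.sum_univ_three]
    simp only [e1, e2, e3, e4, e5]
    simp only [symp, Fin.sum_univ_three]
    simp only [s10, s20, s21, t22]
    linear_combination (norm := ring1)
        ((-1) * (d 0 (A 0 0) x) + (-2/3) * (d 0 (A 0 0) x) * (l 0) * (l 0) + (-2/3) * (d 0 (A 0 0) x) * (m 0) * (m 0) + (-2/3) * (d 0 (A 0 0) x) * (n 0) * (n 0) + (-1) * (d 0 (A 0 1) x) * (l 0) * (l 1) + (-1) * (d 0 (A 0 1) x) * (m 0) * (m 1) + (-1) * (d 0 (A 0 1) x) * (n 0) * (n 1) + (-1) * (d 0 (A 0 2) x) * (l 0) * (l 2) + (-1) * (d 0 (A 0 2) x) * (m 0) * (m 2) + (-1) * (d 0 (A 0 2) x) * (n 0) * (n 2) + (2/3) * (d 0 κ x) + (1/3) * (d 1 (A 0 0) x) * (l 0) * (l 1) + (1/3) * (d 1 (A 0 0) x) * (m 0) * (m 1) + (1/3) * (d 1 (A 0 0) x) * (n 0) * (n 1) + (-1) *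 (d 1 (A 0 1) x) + (1/3) * (d 2 (A 0 0) x) * (l 0) * (l 2) + (1/3) * (d 2 (A 0 0) x) * (m 0) * (m 2) + (1/3) * (d 2 (A 0 0) x) * (n 0) * (n 2) + (-1) * (d 2 (A 0 2) x)) * h00
        + ((-1) * (d 0 (A 0 1) x) + (-1/3) * (d 0 (A 0 1) x) * (l 0) * (l 0) + (-1/3) * (d 0 (A 0 1) x) * (m 0) * (m 0) + (-1/3) * (d 0 (A 0 1) x) * (n 0) * (n 0) + (-1) * (d 0 (A 1 1) x) * (l 0) * (l 1) + (-1) * (d 0 (A 1 1) x) * (m 0) * (m 1) + (-1) * (d 0 (A 1 1) x) * (n 0) * (n 1) + (-1) * (d 0 (A 1 2) x) * (l 0) * (l 2) + (-1) * (d 0 (A 1 2) x) * (m 0) * (m 2) + (-1) * (d 0 (A 1 2) x) * (n 0) * (n 2) + (-1) * (d 1 (A 0 0) x) * (l 0) * (l 0) + (-1) * (d 1 (A 0 0) x) * (m 0) * (m 0) + (-1) * (d 1 (A 0 0) x) * (n 0) * (n 0) + (-1/3) * (d 1 (A 0 1) x) * (l 0) * (l 1) + (-1/3) * (d 1 (A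 0 1) x) * (m 0) * (m 1) + (-1/3) * (d 1 (A 0 1) x) * (n 0) * (n 1) + (-1) * (d 1 (A 0 2) x) * (l 0) * (l 2) + (-1) * (d 1 (A 0 2) x) * (m 0) * (m 2) + (-1) * (d 1 (A 0 2) x) * (n 0) * (n 2) + (-1) * (d 1 (A 1 1) x) + (2/3) * (d 1 κ x) + (2/3) * (d 2 (A 0 1) x) * (l 0) * (l 2) + (2/3) * (d 2 (A 0 1) x) * (m 0) * (m 2) + (2/3) * (d 2 (A 0 1) x) * (n 0) * (n 2) + (-1) * (d 2 (A 1 2) x)) * h01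
        + ((d 0 (A 0 0) x) * (l 0) * (l 2) + (d 0 (A 0 0) x) * (m 0) * (m 2) + (d 0 (A 0 0) x) * (n 0) * (n 2) + (-1) * (d 0 (A 0 2) x) + (-1/3) * (d 0 (A 0 2) x) * (l 0) * (l 0) + (-1/3) * (d 0 (A 0 2) x) * (m 0) * (m 0) + (-1/3) * (d 0 (A 0 2) x) * (n 0) * (n 0) + (d 0 (A 1 1) x) * (l 0) * (l 2) + (d 0 (A 1 1) x) * (m 0) * (m 2) + (d 0 (A 1 1) x) * (n 0) * (n 2) + (-1) * (d 0 (A 1 2) x) * (l 0) * (l 1) + (-1) * (d 0 (A 1 2) x) * (m 0) * (m 1) + (-1) * (d 0 (A 1 2) x) * (n 0) * (n 1) + (2/3) * (d 1 (A 0 2) x) * (l 0) * (l 1) + (2/3) * (d 1 (A 0 2) x) * (m 0) * (m 1) + (2/3) * (d 1 (A 0 2) x) * (n 0) * (n 1) + (-1) * (d 1 (A 1 2) x) + (d 2 (A 0 0) x) + (-1) * (d 2 (A 0 0) x) * (l 0) * (l 0) + (-1) * (d 2 (A 0 0) x) * (m 0) * (m 0) + (-1) * (d 2 (A 0 0) x)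 * (n 0) * (n 0) + (-1) * (d 2 (A 0 1) x) * (l 0) * (l 1) + (-1) * (d 2 (A 0 1) x) * (m 0) * (m 1) + (-1) * (d 2 (A 0 1) x) * (n 0) * (n 1) + (-1/3) * (d 2 (A 0 2) x) * (l 0) * (l 2) + (-1/3) * (d 2 (A 0 2) x) * (m 0) * (m 2) + (-1/3) * (d 2 (A 0 2) x) * (n 0) * (n 2) + (d 2 (A 1 1) x) + (2/3) * (d 2 κ x)) * h02
        + ((1/3) * (d 0 (A 1 1) x) * (l 0) * (l 0) + (1/3) * (d 0 (A 1 1) x) * (m 0) * (m 0) + (1/3) * (d 0 (A 1 1) x) * (n 0) * (n 0) + (-1) * (d 1 (A 0 1) x) * (l 0) * (l 0) + (-1) * (d 1 (A 0 1) x) * (m 0) * (m 0) + (-1) * (d 1 (A 0 1) x) * (n 0) * (n 0) + (-2/3) * (d 1 (A 1 1) x) * (l 0) * (l 1) + (-2/3) * (d 1 (A 1 1) x) * (m 0) * (m 1) + (-2/3) * (d 1 (A 1 1) x) * (n 0) * (n 1) + (-1) * (d 1 (A 1 2) x) * (l 0) * (l 2) + (-1) * (d 1 (A 1 2) x) * (m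 0) * (m 2) + (-1) * (d 1 (A 1 2) x) * (n 0) * (n 2) + (1/3) * (d 2 (A 1 1) x) * (l 0) * (l 2) + (1/3) * (d 2 (A 1 1) x) * (m 0) * (m 2) + (1/3) * (d 2 (A 1 1) x) * (n 0) * (n 2)) * h11
        + ((2/3) * (d 0 (A 1 2) x) * (l 0) * (l 0) + (2/3) * (d 0 (A 1 2) x) * (m 0) * (m 0) + (2/3) * (d 0 (A 1 2) x) * (n 0) * (n 0) + (d 1 (A 0 0) x) * (l 0) * (l 2) + (d 1 (A 0 0) x) * (m 0) * (m 2) + (d 1 (A 0 0) x) * (n 0) * (n 2) + (-1) * (d 1 (A 0 2) x) * (l 0) * (l 0) + (-1) * (d 1 (A 0 2) x) * (m 0) * (m 0) + (-1) * (d 1 (A 0 2) x) * (n 0) * (n 0) + (d 1 (A 1 1) x) * (l 0) * (l 2) + (d 1 (A 1 1) x) * (m 0) * (m 2) + (d 1 (A 1 1) x) * (n 0) * (n 2) + (-1/3) * (d 1 (A 1 2) x) * (l 0) * (l 1) + (-1/3) * (d 1 (A 1 2) x) * (m 0) * (m 1) + (-1/3) * (d 1 (A 1 2) x) * (n 0)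 * (n 1) + (-1) * (d 2 (A 0 1) x) * (l 0) * (l 0) + (-1) * (d 2 (A 0 1) x) * (m 0) * (m 0) + (-1) * (d 2 (A 0 1) x) * (n 0) * (n 0) + (-1) * (d 2 (A 1 1) x) * (l 0) * (l 1) + (-1) * (d 2 (A 1 1) x) * (m 0) * (m 1) + (-1) * (d 2 (A 1 1) x) * (n 0) * (n 1) + (-1/3) * (d 2 (A 1 2) x) * (l 0) * (l 2) + (-1/3) * (d 2 (A 1 2) x) * (m 0) * (m 2) + (-1/3) * (d 2 (A 1 2) x) * (n 0) * (n 2)) * h12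
        + ((-1/3) * (d 0 (A 0 0) x) * (l 0) * (l 0) + (-1/3) * (d 0 (A 0 0) x) * (m 0) * (m 0) + (-1/3) * (d 0 (A 0 0) x) * (n 0) * (n 0) + (-1/3) * (d 0 (A 1 1) x) * (l 0) * (l 0) + (-1/3) * (d 0 (A 1 1) x) * (m 0) * (m 0) + (-1/3) * (d 0 (A 1 1) x) * (n 0) * (n 0) + (-1/3) * (d 1 (A 0 0) x) * (l 0) * (l 1) + (-1/3) * (d 1 (A 0 0) x) * (m 0) * (m 1) + (-1/3) * (d 1 (A 0 0) x) * (n 0) * (n 1) + (-1/3) * (d 1 (A 1 1) x) * (l 0) * (l 1) + (-1/3) * (d 1 (A 1 1) x) * (m 0) * (m 1) + (-1/3) * (d 1 (A 1 1) x) * (n 0) * (n 1) + (2/3) * (d 2 (A 0 0) x) * (l 0) * (l 2) + (2/3) * (d 2 (A 0 0) x) * (m 0) * (m 2) + (2/3) * (d 2 (A 0 0) x) * (n 0) * (n 2) + (-1) * (d 2 (A 0 2) x) * (l 0) * (l 0) + (-1) * (d 2 (A 0 2) x) * (m 0) * (m 0) + (-1) * (d 2 (A 0 2) x) * (n 0)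 * (n 0) + (2/3) * (d 2 (A 1 1) x) * (l 0) * (l 2) + (2/3) * (d 2 (A 1 1) x) * (m 0) * (m 2) + (2/3) * (d 2 (A 1 1) x) * (n 0) * (n 2) + (-1) * (d 2 (A 1 2) x) * (l 0) * (l 1) + (-1) * (d 2 (A 1 2) x) * (m 0) * (m 1) + (-1) * (d 2 (A 1 2) x) * (n 0) * (n 1)) * h22
  ·
    rw [hM]
    simp only [dirD, Fin.sum_univ_three]
    simp only [e1, e2, e3, e4, e5]
    simp only [symp, Fin.sum_univ_three]
    simp only [s10, s20, s21, t22]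
    linear_combination (norm := ring1)
        ((-2/3) * (d 0 (A 0 0) x) * (l 0) * (l 1) + (-2/3) * (d 0 (A 0 0) x) * (m 0) * (m 1) + (-2/3) * (d 0 (A 0 0) x) * (n 0) * (n 1) + (-1) * (d 0 (A 0 1) x) * (l 1) * (l 1) + (-1) * (d 0 (A 0 1) x) * (m 1) * (m 1) + (-1) * (d 0 (A 0 1) x) * (n 1) * (n 1) + (-1) * (d 0 (A 0 2) x) * (l 1) * (l 2) + (-1) * (d 0 (A 0 2) x) * (m 1) * (m 2) + (-1) * (d 0 (A 0 2) x) * (n 1) * (n 2) + (1/3) * (d 1 (A 0 0) x) * (l 1) * (l 1) + (1/3) * (d 1 (A 0 0) x) * (m 1) * (m 1) + (1/3) * (d 1 (A 0 0) x) * (n 1) * (n 1) + (1/3) * (d 2 (A 0 0) x) * (l 1) * (l 2) + (1/3) * (d 2 (A 0 0) x) * (m 1) * (m 2) + (1/3) * (d 2 (A 0 0) x) * (n 1) * (n 2)) * h00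
        + ((-1) * (d 0 (A 0 0) x) + (-1/3) * (d 0 (A 0 1) x) * (l 0) * (l 1) + (-1/3) * (d 0 (A 0 1) x) * (m 0) * (m 1) + (-1/3) * (d 0 (A 0 1) x) * (n 0) * (n 1) + (-1) * (d 0 (A 1 1) x) * (l 1) * (l 1) + (-1) * (d 0 (A 1 1) x) * (m 1) * (m 1) + (-1) * (d 0 (A 1 1) x) * (n 1) * (n 1) + (-1) * (d 0 (A 1 2) x) * (l 1) * (l 2) + (-1) * (d 0 (A 1 2) x) * (m 1) * (m 2) + (-1) * (d 0 (A 1 2) x) * (n 1) * (n 2) + (2/3) * (d 0 κ x) + (-1) * (d 1 (A 0 0) x) * (l 0) * (l 1) + (-1) * (d 1 (A 0 0) x) * (m 0) * (m 1) + (-1) * (d 1 (A 0 0) x) * (n 0) * (n 1) + (-1) * (d 1 (A 0 1) x) + (-1/3) * (d 1 (A 0 1) x) * (l 1) * (l 1) + (-1/3) * (d 1 (A 0 1) x) * (m 1) * (m 1) + (-1/3) * (d 1 (A 0 1) x) * (n 1) * (n 1) + (-1) * (d 1 (A 0 2) x) * (l 1) * (l 2) + (-1) * (d 1 (A 0 2)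 x) * (m 1) * (m 2) + (-1) * (d 1 (A 0 2) x) * (n 1) * (n 2) + (2/3) * (d 2 (A 0 1) x) * (l 1) * (l 2) + (2/3) * (d 2 (A 0 1) x) * (m 1) * (m 2) + (2/3) * (d 2 (A 0 1) x) * (n 1) * (n 2) + (-1) * (d 2 (A 0 2) x)) * h01
        + ((d 0 (A 0 0) x) * (l 1) * (l 2) + (d 0 (A 0 0) x) * (m 1) * (m 2) + (d 0 (A 0 0) x) * (n 1) * (n 2) + (-1/3) * (d 0 (A 0 2) x) * (l 0) * (l 1) + (-1/3) * (d 0 (A 0 2) x) * (m 0) * (m 1) + (-1/3) * (d 0 (A 0 2) x) * (n 0) * (n 1) + (d 0 (A 1 1) x) * (l 1) * (l 2) + (d 0 (A 1 1) x) * (m 1) * (m 2) + (d 0 (A 1 1) x) * (n 1) * (n 2) + (-1) * (d 0 (A 1 2) x) * (l 1) * (l 1) + (-1) * (d 0 (A 1 2) x) * (m 1) * (m 1) + (-1) * (d 0 (A 1 2) x) * (n 1) * (n 1) + (2/3) * (d 1 (A 0 2) x) * (l 1) * (l 1) + (2/3) * (d 1 (A 0 2) x) * (m 1) * (m 1) +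 (2/3) * (d 1 (A 0 2) x) * (n 1) * (n 1) + (-1) * (d 2 (A 0 0) x) * (l 0) * (l 1) + (-1) * (d 2 (A 0 0) x) * (m 0) * (m 1) + (-1) * (d 2 (A 0 0) x) * (n 0) * (n 1) + (-1) * (d 2 (A 0 1) x) * (l 1) * (l 1) + (-1) * (d 2 (A 0 1) x) * (m 1) * (m 1) + (-1) * (d 2 (A 0 1) x) * (n 1) * (n 1) + (-1/3) * (d 2 (A 0 2) x) * (l 1) * (l 2) + (-1/3) * (d 2 (A 0 2) x) * (m 1) * (m 2) + (-1/3) * (d 2 (A 0 2) x) * (n 1) * (n 2)) * h02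
        + ((-1) * (d 0 (A 0 1) x) + (1/3) * (d 0 (A 1 1) x) * (l 0) * (l 1) + (1/3) * (d 0 (A 1 1) x) * (m 0) * (m 1) + (1/3) * (d 0 (A 1 1) x) * (n 0) * (n 1) + (-1) * (d 1 (A 0 1) x) * (l 0) * (l 1) + (-1) * (d 1 (A 0 1) x) * (m 0) * (m 1) + (-1) * (d 1 (A 0 1) x) * (n 0) * (n 1) + (-1) * (d 1 (A 1 1) x) + (-2/3) * (d 1 (A 1 1) x) * (l 1) * (l 1) + (-2/3) * (d 1 (A 1 1) x) * (m 1) * (m 1) + (-2/3) * (d 1 (A 1 1) x) * (n 1) * (n 1) + (-1) * (d 1 (A 1 2) x) * (l 1) * (l 2) + (-1) * (d 1 (A 1 2) x) * (m 1) * (m 2) + (-1) * (d 1 (A 1 2) x) * (n 1) * (n 2) + (2/3) * (d 1 κ x) + (1/3) * (d 2 (A 1 1) x) * (l 1) * (l 2) + (1/3) * (d 2 (A 1 1) x) * (m 1) * (m 2) + (1/3) * (d 2 (A 1 1) x) * (n 1) * (n 2) + (-1) * (d 2 (A 1 2) x)) * h11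
        + ((-1) * (d 0 (A 0 2) x) + (2/3) * (d 0 (A 1 2) x) * (l 0) * (l 1) + (2/3) * (d 0 (A 1 2) x) * (m 0) * (m 1) + (2/3) * (d 0 (A 1 2) x) * (n 0) * (n 1) + (d 1 (A 0 0) x) * (l 1) * (l 2) + (d 1 (A 0 0) x) * (m 1) * (m 2) + (d 1 (A 0 0) x) * (n 1) * (n 2) + (-1) * (d 1 (A 0 2) x) * (l 0) * (l 1) + (-1) * (d 1 (A 0 2) x) * (m 0) * (m 1) + (-1) * (d 1 (A 0 2) x) * (n 0) * (n 1) + (d 1 (A 1 1) x) * (l 1) * (l 2) + (d 1 (A 1 1) x) * (m 1) * (m 2) + (d 1 (A 1 1) x) * (n 1) * (n 2) + (-1) * (d 1 (A 1 2) x) + (-1/3) * (d 1 (A 1 2) x) * (l 1) * (l 1) + (-1/3) * (d 1 (A 1 2) x) * (m 1) * (m 1) + (-1/3) * (d 1 (A 1 2) x) * (n 1) * (n 1) + (d 2 (A 0 0) x) + (-1) * (d 2 (A 0 1) x) * (l 0) * (l 1) + (-1) * (d 2 (A 0 1) x) * (m 0) * (m 1) + (-1) * (d 2 (A 0 1) x)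 * (n 0) * (n 1) + (d 2 (A 1 1) x) + (-1) * (d 2 (A 1 1) x) * (l 1) * (l 1) + (-1) * (d 2 (A 1 1) x) * (m 1) * (m 1) + (-1) * (d 2 (A 1 1) x) * (n 1) * (n 1) + (-1/3) * (d 2 (A 1 2) x) * (l 1) * (l 2) + (-1/3) * (d 2 (A 1 2) x) * (m 1) * (m 2) + (-1/3) * (d 2 (A 1 2) x) * (n 1) * (n 2) + (2/3) * (d 2 κ x)) * h12
        + ((-1/3) * (d 0 (A 0 0) x) * (l 0) * (l 1) + (-1/3) * (d 0 (A 0 0) x) * (m 0) * (m 1) + (-1/3) * (d 0 (A 0 0) x) * (n 0) * (n 1) + (-1/3) * (d 0 (A 1 1) x) * (l 0) * (l 1) + (-1/3) * (d 0 (A 1 1) x) * (m 0) * (m 1) + (-1/3) * (d 0 (A 1 1) x) * (n 0) * (n 1) + (-1/3) * (d 1 (A 0 0) x) * (l 1) * (l 1) + (-1/3) * (d 1 (A 0 0) x) * (m 1) * (m 1) + (-1/3) * (d 1 (A 0 0) x) * (n 1) * (n 1) + (-1/3) * (d 1 (A 1 1) x) * (l 1) * (l 1) + (-1/3) * (d 1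 (A 1 1) x) * (m 1) * (m 1) + (-1/3) * (d 1 (A 1 1) x) * (n 1) * (n 1) + (2/3) * (d 2 (A 0 0) x) * (l 1) * (l 2) + (2/3) * (d 2 (A 0 0) x) * (m 1) * (m 2) + (2/3) * (d 2 (A 0 0) x) * (n 1) * (n 2) + (-1) * (d 2 (A 0 2) x) * (l 0) * (l 1) + (-1) * (d 2 (A 0 2) x) * (m 0) * (m 1) + (-1) * (d 2 (A 0 2) x) * (n 0) * (n 1) + (2/3) * (d 2 (A 1 1) x) * (l 1) * (l 2) + (2/3) * (d 2 (A 1 1) x) * (m 1) * (m 2) + (2/3) * (d 2 (A 1 1) x) * (n 1) * (n 2) + (-1) * (d 2 (A 1 2) x) * (l 1) * (l 1) + (-1) * (d 2 (A 1 2) x) * (m 1) * (m 1) + (-1) * (d 2 (A 1 2) x) * (n 1) * (n 1)) * h22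
  ·
    rw [hM]
    simp only [dirD, Fin.sum_univ_three]
    simp only [e1, e2, e3, e4, e5]
    simp only [symp, Fin.sum_univ_three]
    simp only [s10, s20, s21, t22]
    linear_combination (norm := ring1)
        ((-2/3) * (d 0 (A 0 0) x) * (l 0) * (l 2) + (-2/3) * (d 0 (A 0 0) x) * (m 0) * (m 2) + (-2/3) * (d 0 (A 0 0) x) * (n 0) * (n 2) + (-1) * (d 0 (A 0 1) x) * (l 1) * (l 2) + (-1) * (d 0 (A 0 1) x) * (m 1) * (m 2) + (-1) * (d 0 (A 0 1) x) * (n 1) * (n 2) + (-1) * (d 0 (A 0 2) x) * (l 2) * (l 2) + (-1) * (d 0 (A 0 2) x) * (m 2) * (m 2) + (-1) * (d 0 (A 0 2) x) * (n 2) * (n 2) + (1/3) * (d 1 (A 0 0) x) * (l 1) * (l 2) + (1/3) * (d 1 (A 0 0) x) * (m 1) * (m 2) + (1/3) * (d 1 (A 0 0) x) * (n 1) * (n 2) + (1/3) * (d 2 (A 0 0) x) * (l 2) * (l 2) + (1/3) * (d 2 (A 0 0) x) * (m 2) * (m 2) + (1/3) * (d 2 (A 0 0) x) * (n 2) * (n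 2)) * h00
        + ((-1/3) * (d 0 (A 0 1) x) * (l 0) * (l 2) + (-1/3) * (d 0 (A 0 1) x) * (m 0) * (m 2) + (-1/3) * (d 0 (A 0 1) x) * (n 0) * (n 2) + (-1) * (d 0 (A 1 1) x) * (l 1) * (l 2) + (-1) * (d 0 (A 1 1) x) * (m 1) * (m 2) + (-1) * (d 0 (A 1 1) x) * (n 1) * (n 2) + (-1) * (d 0 (A 1 2) x) * (l 2) * (l 2) + (-1) * (d 0 (A 1 2) x) * (m 2) * (m 2) + (-1) * (d 0 (A 1 2) x) * (n 2) * (n 2) + (-1) * (d 1 (A 0 0) x) * (l 0) * (l 2) + (-1) * (d 1 (A 0 0) x) * (m 0) * (m 2) + (-1) * (d 1 (A 0 0) x) * (n 0) * (n 2) + (-1/3) * (d 1 (A 0 1) x) * (l 1) * (l 2) + (-1/3) * (d 1 (A 0 1) x) * (m 1) * (m 2) + (-1/3) * (d 1 (A 0 1) x) * (n 1) * (n 2) + (-1) * (d 1 (A 0 2) x) * (l 2) * (l 2) + (-1) * (d 1 (A 0 2) x) * (m 2) * (m 2) + (-1) * (d 1 (A 0 2) x) * (n 2) * (n 2) + (2/3)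 * (d 2 (A 0 1) x) * (l 2) * (l 2) + (2/3) * (d 2 (A 0 1) x) * (m 2) * (m 2) + (2/3) * (d 2 (A 0 1) x) * (n 2) * (n 2)) * h01
        + ((-1) * (d 0 (A 0 0) x) + (d 0 (A 0 0) x) * (l 2) * (l 2) + (d 0 (A 0 0) x) * (m 2) * (m 2) + (d 0 (A 0 0) x) * (n 2) * (n 2) + (-1/3) * (d 0 (A 0 2) x) * (l 0) * (l 2) + (-1/3) * (d 0 (A 0 2) x) * (m 0) * (m 2) + (-1/3) * (d 0 (A 0 2) x) * (n 0) * (n 2) + (d 0 (A 1 1) x) * (l 2) * (l 2) + (d 0 (A 1 1) x) * (m 2) * (m 2) + (d 0 (A 1 1) x) * (n 2) * (n 2) + (-1) * (d 0 (A 1 2) x) * (l 1) * (l 2) + (-1) * (d 0 (A 1 2) x) * (m 1) * (m 2) + (-1) * (d 0 (A 1 2) x) * (n 1) * (n 2) + (2/3) * (d 0 κ x) + (-1) * (d 1 (A 0 1) x) + (2/3) * (d 1 (A 0 2) x) * (l 1) * (l 2) + (2/3) * (d 1 (A 0 2) x) * (m 1) * (m 2) + (2/3) * (d 1 (A 0 2)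 x) * (n 1) * (n 2) + (-1) * (d 2 (A 0 0) x) * (l 0) * (l 2) + (-1) * (d 2 (A 0 0) x) * (m 0) * (m 2) + (-1) * (d 2 (A 0 0) x) * (n 0) * (n 2) + (-1) * (d 2 (A 0 1) x) * (l 1) * (l 2) + (-1) * (d 2 (A 0 1) x) * (m 1) * (m 2) + (-1) * (d 2 (A 0 1) x) * (n 1) * (n 2) + (-1) * (d 2 (A 0 2) x) + (-1/3) * (d 2 (A 0 2) x) * (l 2) * (l 2) + (-1/3) * (d 2 (A 0 2) x) * (m 2) * (m 2) + (-1/3) * (d 2 (A 0 2) x) * (n 2) * (n 2)) * h02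
        + ((1/3) * (d 0 (A 1 1) x) * (l 0) * (l 2) + (1/3) * (d 0 (A 1 1) x) * (m 0) * (m 2) + (1/3) * (d 0 (A 1 1) x) * (n 0) * (n 2) + (-1) * (d 1 (A 0 1) x) * (l 0) * (l 2) + (-1) * (d 1 (A 0 1) x) * (m 0) * (m 2) + (-1) * (d 1 (A 0 1) x) * (n 0) * (n 2) + (-2/3) * (d 1 (A 1 1) x) * (l 1) * (l 2) + (-2/3) * (d 1 (A 1 1) x) * (m 1) * (m 2) + (-2/3) * (d 1 (A 1 1) x) * (n 1) * (n 2) + (-1) * (d 1 (A 1 2) x) * (l 2) * (l 2) + (-1) * (d 1 (A 1 2) x) * (m 2) * (m 2) + (-1) * (d 1 (A 1 2) x) * (n 2) * (n 2) + (1/3) * (d 2 (A 1 1) x) * (l 2) * (l 2) + (1/3) * (d 2 (A 1 1) x) * (m 2) * (m 2) + (1/3) * (d 2 (A 1 1) x) * (n 2) * (n 2)) * h11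
        + ((-1) * (d 0 (A 0 1) x) + (2/3) * (d 0 (A 1 2) x) * (l 0) * (l 2) + (2/3) * (d 0 (A 1 2) x) * (m 0) * (m 2) + (2/3) * (d 0 (A 1 2) x) * (n 0) * (n 2) + (d 1 (A 0 0) x) * (l 2) * (l 2) + (d 1 (A 0 0) x) * (m 2) * (m 2) + (d 1 (A 0 0) x) * (n 2) * (n 2) + (-1) * (d 1 (A 0 2) x) * (l 0) * (l 2) + (-1) * (d 1 (A 0 2) x) * (m 0) * (m 2) + (-1) * (d 1 (A 0 2) x) * (n 0) * (n 2) + (-1) * (d 1 (A 1 1) x) + (d 1 (A 1 1) x) * (l 2) * (l 2) + (d 1 (A 1 1) x) * (m 2) * (m 2) + (d 1 (A 1 1) x) * (n 2) * (n 2) + (-1/3) * (d 1 (A 1 2) x) * (l 1) * (l 2) + (-1/3) * (d 1 (A 1 2) x) * (m 1) * (m 2) + (-1/3) * (d 1 (A 1 2) x) * (n 1) * (n 2) + (2/3) * (d 1 κ x) + (-1) * (d 2 (A 0 1) x) * (l 0) * (l 2) + (-1) * (d 2 (A 0 1) x) * (m 0) * (m 2) + (-1) * (d 2 (A 0 1)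 x) * (n 0) * (n 2) + (-1) * (d 2 (A 1 1) x) * (l 1) * (l 2) + (-1) * (d 2 (A 1 1) x) * (m 1) * (m 2) + (-1) * (d 2 (A 1 1) x) * (n 1) * (n 2) + (-1) * (d 2 (A 1 2) x) + (-1/3) * (d 2 (A 1 2) x) * (l 2) * (l 2) + (-1/3) * (d 2 (A 1 2) x) * (m 2) * (m 2) + (-1/3) * (d 2 (A 1 2) x) * (n 2) * (n 2)) * h12
        + ((-1/3) * (d 0 (A 0 0) x) * (l 0) * (l 2) + (-1/3) * (d 0 (A 0 0) x) * (m 0) * (m 2) + (-1/3) * (d 0 (A 0 0) x) * (n 0) * (n 2) + (-1) * (d 0 (A 0 2) x) + (-1/3) * (d 0 (A 1 1) x) * (l 0) * (l 2) + (-1/3) * (d 0 (A 1 1) x) * (m 0) * (m 2) + (-1/3) * (d 0 (A 1 1) x) * (n 0) * (n 2) + (-1/3) * (d 1 (A 0 0) x) * (l 1) * (l 2) + (-1/3) * (d 1 (A 0 0) x) * (m 1) * (m 2) + (-1/3) * (d 1 (A 0 0) x) * (n 1) * (n 2) + (-1/3) * (d 1 (A 1 1) x) * (l 1) * (l 2)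 + (-1/3) * (d 1 (A 1 1) x) * (m 1) * (m 2) + (-1/3) * (d 1 (A 1 1) x) * (n 1) * (n 2) + (-1) * (d 1 (A 1 2) x) + (d 2 (A 0 0) x) + (2/3) * (d 2 (A 0 0) x) * (l 2) * (l 2) + (2/3) * (d 2 (A 0 0) x) * (m 2) * (m 2) + (2/3) * (d 2 (A 0 0) x) * (n 2) * (n 2) + (-1) * (d 2 (A 0 2) x) * (l 0) * (l 2) + (-1) * (d 2 (A 0 2) x) * (m 0) * (m 2) + (-1) * (d 2 (A 0 2) x) * (n 0) * (n 2) + (d 2 (A 1 1) x) + (2/3) * (d 2 (A 1 1) x) * (l 2) * (l 2) + (2/3) * (d 2 (A 1 1) x) * (m 2) * (m 2) + (2/3) * (d 2 (A 1 1) x) * (n 2) * (n 2) + (-1) * (d 2 (A 1 2) x) * (l 1) * (l 2) + (-1) * (d 2 (A 1 2) x) * (m 1) * (m 2) + (-1) * (d 2 (A 1 2) x) * (n 1) * (n 2) + (2/3) * (d 2 κ x)) * h22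
end
end

section
/- Let φ, κ be smooth scalar fields, Γ_i a smooth vector field, and γ̃_ij, A_ij smooth symmetric matrix fields on ℝ × ℝ³ satisfying the reduced linearized BSSN equations (R1) ∂_t φ = −(1/6)κ, (R3) ∂_t γ̃_ij = −2A_ij, (R4) ∂_t A_ij = −(1/2)Δγ̃_ij + (1/2)(∂_i Γ_j + ∂_j Γ_i) − 8∂_i∂_j φ, and (R5) ∂_t Γ_i = −(4/3)∂_i κ. Define Q_lij := −(1/2)∂_l γ̃_ij + (1/2)[ δ_li(Γ_j − 8∂_j φ) + δ_lj(Γ_i − 8∂_i φ) ]. Then at every point of ℝ × ℝ³, ∂_t [ (1/2)Σ_{ij} A_ij² + (1/2)Σ_{lij} Q_lij² ] = Σ_l ∂_l ( Σ_{ij} Q_lij A_ij ). -/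
noncomputable section

/-!
The pair `(A, Q)` solves a first-order symmetric hyperbolic system:
`∂_t Q_lij = ∂_l A_ij`, because after commuting `∂_t` with `∂_l, ∂_j` the equations (R1), (R3),
(R5) give `∂_t (Γ_j - 8 ∂_j φ) = -(4/3) ∂_j κ + (4/3) ∂_j κ = 0` and `∂_t ∂_l γ̃_ij = -2 ∂_l A_ij`;
and `∂_t A_ij = Σ_l ∂_l Q_lij`, because the Kronecker deltas collapse the divergence of `Q` to the
right-hand side of (R4) (using `∂_i ∂_j φ = ∂_j ∂_i φ`). For any such system the energy identity is
the product rule: `Σ A ∂_t A + Σ Q ∂_t Q = Σ_l (A ∂_l Q_l + Q_l ∂_l A) = Σ_l ∂_l (Q_l A)`.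
-/

open scoped ContDiff

section DirDeriv

variable {E : Type*} [NormedAddCommGroup E] [NormedSpace ℝ E] {f g : E → ℝ} {v p : E}

def dirDeriv (v : E) (f : E → ℝ) (p : E) : ℝ := fderiv ℝ f p v

theorem ContDiff.dirDeriv (hf : ContDiff ℝ ∞ f) (v : E) : ContDiff ℝ ∞ (dirDeriv v f) :=
  (hf.fderiv_right le_rfl).clm_apply contDiff_const

theorem dirDeriv_comm (hf : ContDiff ℝ 2 f) (v w : E) :
    dirDeriv v (dirDeriv w f) = dirDeriv w (dirDeriv v f) := by
  have hf' : Differentiable ℝ (fderiv ℝ f) := (hf.fderiv_right le_rfl).differentiable one_ne_zero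
  have key : ∀ u z p, dirDeriv u (dirDeriv z f) p = fderiv ℝ (fderiv ℝ f) p u z := fun u z p => by
    change fderiv ℝ (fun q => fderiv ℝ f q z) p u = _
    rw [fderiv_clm_apply (hf' p) (differentiableAt_const z)]
    simp
  funext p
  rw [key, key, (hf.contDiffAt.isSymmSndFDerivAt (by simp)).eq]

theorem dirDeriv_fun_add (hf : DifferentiableAt ℝ f p) (hg : DifferentiableAt ℝ g p) :
    dirDeriv v (fun q => f q + g q) p = dirDeriv v f p + dirDeriv v g p := by
  simp [dirDeriv, fderiv_fun_add hf hg]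

theorem dirDeriv_fun_sub (hf : DifferentiableAt ℝ f p) (hg : DifferentiableAt ℝ g p) :
    dirDeriv v (fun q => f q - g q) p = dirDeriv v f p - dirDeriv v g p := by
  simp [dirDeriv, fderiv_fun_sub hf hg]

theorem dirDeriv_const_mul (hf : DifferentiableAt ℝ f p) (c : ℝ) :
    dirDeriv v (fun q => c * f q) p = c * dirDeriv v f p := by
  simp [dirDeriv, fderiv_const_mul hf]

theorem dirDeriv_fun_mul (hf : DifferentiableAt ℝ f p) (hg : DifferentiableAt ℝ g p) :
    dirDeriv v (fun q => f q * g q) p = dirDeriv v f p * g p + f p * dirDeriv v g p := by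
  simp only [dirDeriv, fderiv_fun_mul hf hg, add_apply, smul_apply,
    smul_eq_mul]
  ring

theorem dirDeriv_fun_pow (hf : DifferentiableAt ℝ f p) (n : ℕ) :
    dirDeriv v (fun q => f q ^ n) p = n * f p ^ (n - 1) * dirDeriv v f p := by
  simp [dirDeriv, fderiv_fun_pow n hf]

theorem dirDeriv_fun_sum {ι : Type*} {s : Finset ι} {F : ι → E → ℝ}
    (hF : ∀ i ∈ s, DifferentiableAt ℝ (F i) p) :
    dirDeriv v (fun q => ∑ i ∈ s, F i q) p = ∑ i ∈ s, dirDeriv v (F i) p := by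
  simp [dirDeriv, fderiv_fun_sum hF]

theorem dirDeriv_energy_eq_sum_dirDeriv_flux {ι σ : Type*} [Fintype ι] [Fintype σ]
    (t : E) (e : σ → E) {u : ι → E → ℝ} {w : σ → ι → E → ℝ}
    (hu : ∀ i, Differentiable ℝ (u i)) (hw : ∀ l i, Differentiable ℝ (w l i)) (p : E)
    (hut : ∀ i, dirDeriv t (u i) p = ∑ l, dirDeriv (e l) (w l i) p)
    (hwt : ∀ l i, dirDeriv t (w l i) p = dirDeriv (e l) (u i) p) :
    dirDeriv t (fun q => (1/2) * ∑ i, u i q ^ 2 + (1/2) * ∑ l, ∑ i, w l i q ^ 2) p =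
      ∑ l, dirDeriv (e l) (fun q => ∑ i, w l i q * u i q) p := by
  simp (disch := intros; fun_prop) only [dirDeriv_fun_add, dirDeriv_const_mul, dirDeriv_fun_sum,
    dirDeriv_fun_pow, dirDeriv_fun_mul, hut, hwt]
  simp only [Finset.sum_add_distrib, Finset.mul_sum]
  rw [Finset.sum_comm]
  congr 1 <;> refine Finset.sum_congr rfl fun _ _ => Finset.sum_congr rfl fun _ _ => ?_ <;>
    push_cast <;> ring

end DirDeriv

def timeDir : Spc := (1, 0)

def spaceDir (i : Fin 3) : Spc := (0, Pi.single i 1)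

theorem pt_eq_dirDeriv {f : Spc → ℝ} (hf : Differentiable ℝ f) : pt f = dirDeriv timeDir f := by
  funext p
  exact ((hf _).hasFDerivAt.comp_hasDerivAt p.1
    ((hasDerivAt_id p.1).prodMk (hasDerivAt_const p.1 p.2))).deriv

theorem ps_eq_dirDeriv (i : Fin 3) {f : Spc → ℝ} (hf : Differentiable ℝ f) :
    ps i f = dirDeriv (spaceDir i) f := by
  funext p
  have := (hf _).hasFDerivAt.comp_hasDerivAt (p.2 i)
    ((hasDerivAt_const (p.2 i) p.1).prodMk (hasDerivAt_update p.2 i (p.2 i)))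
  simpa [ps, dirDeriv, spaceDir, Function.comp_def] using this.deriv

theorem sum_kron_mul (i : Fin 3) (x : Fin 3 → ℝ) : ∑ l, kron l i * x l = x i := by
  simp [kron]

def bssnQ (φ : Spc → ℝ) (Γ : Fin 3 → Spc → ℝ) (γ : Fin 3 → Fin 3 → Spc → ℝ) (l i j : Fin 3) :
    Spc → ℝ := fun q =>
  -(1/2) * ps l (γ i j) q
    + (1/2) * (kron l i * (Γ j q - 8 * ps j φ q) + kron l j * (Γ i q - 8 * ps i φ q))

section BssnQ

variable {φ : Spc → ℝ} {Γ : Fin 3 → Spc → ℝ} {γ : Fin 3 → Fin 3 → Spc → ℝ}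

theorem bssnQ_eq_dirDeriv (hφ : Differentiable ℝ φ) (hγ : ∀ i j, Differentiable ℝ (γ i j))
    (l i j : Fin 3) :
    bssnQ φ Γ γ l i j = fun q => -(1/2) * dirDeriv (spaceDir l) (γ i j) q
      + (1/2) * (kron l i * (Γ j q - 8 * dirDeriv (spaceDir j) φ q)
        + kron l j * (Γ i q - 8 * dirDeriv (spaceDir i) φ q)) := by
  unfold bssnQ
  simp only [ps_eq_dirDeriv _ (hγ i j), ps_eq_dirDeriv _ hφ]

theorem contDiff_bssnQ (hφ : ContDiff ℝ ∞ φ) (hΓ : ∀ i, ContDiff ℝ ∞ (Γ i))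
    (hγ : ∀ i j, ContDiff ℝ ∞ (γ i j)) (l i j : Fin 3) : ContDiff ℝ ∞ (bssnQ φ Γ γ l i j) := by
  have hφ' := hφ.dirDeriv
  have hγ' := (hγ i j).dirDeriv
  rw [bssnQ_eq_dirDeriv (hφ.differentiable (by simp)) fun i j => (hγ i j).differentiable (by simp)]
  fun_prop

theorem dirDeriv_bssnQ (hφ : ContDiff ℝ ∞ φ) (hΓ : ∀ i, ContDiff ℝ ∞ (Γ i))
    (hγ : ∀ i j, ContDiff ℝ ∞ (γ i j)) (v p : Spc) (l i j : Fin 3) :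
    dirDeriv v (bssnQ φ Γ γ l i j) p = -(1/2) * dirDeriv v (dirDeriv (spaceDir l) (γ i j)) p
      + (1/2) * (kron l i * (dirDeriv v (Γ j) p - 8 * dirDeriv v (dirDeriv (spaceDir j) φ) p)
        + kron l j * (dirDeriv v (Γ i) p - 8 * dirDeriv v (dirDeriv (spaceDir i) φ) p)) := by
  have dφ' w := (hφ.dirDeriv w).differentiable (by simp)
  have dγ' w := ((hγ i j).dirDeriv w).differentiable (by simp)
  have dΓ m := (hΓ m).differentiable (by simp)
  rw [bssnQ_eq_dirDeriv (hφ.differentiable (by simp)) fun i j => (hγ i j).differentiable (by simp)]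
  simp (disch := fun_prop) only [dirDeriv_fun_add, dirDeriv_const_mul, dirDeriv_fun_sub]

theorem dirDeriv_timeDir_bssnQ {κ : Spc → ℝ} {A : Fin 3 → Fin 3 → Spc → ℝ}
    (hφ : ContDiff ℝ ∞ φ) (hκ : ContDiff ℝ ∞ κ) (hΓ : ∀ i, ContDiff ℝ ∞ (Γ i))
    (hγ : ∀ i j, ContDiff ℝ ∞ (γ i j)) (hA : ∀ i j, ContDiff ℝ ∞ (A i j))
    (R1 : ∀ p, pt φ p = -(1/6) * κ p) (R3 : ∀ i j p, pt (γ i j) p = -2 * A i j p)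
    (R5 : ∀ i p, pt (Γ i) p = -(4/3) * ps i κ p) (p : Spc) (l i j : Fin 3) :
    dirDeriv timeDir (bssnQ φ Γ γ l i j) p = dirDeriv (spaceDir l) (A i j) p := by
  have hφt : dirDeriv timeDir φ = fun q => -(1/6) * κ q := by
    rw [← pt_eq_dirDeriv (hφ.differentiable (by simp))]; exact funext R1
  have hγt : dirDeriv timeDir (γ i j) = fun q => -2 * A i j q := by
    rw [← pt_eq_dirDeriv ((hγ i j).differentiable (by simp))]; exact funext (R3 i j)
  have hΓt : ∀ m, dirDeriv timeDir (Γ m) p = -(4/3) * dirDeriv (spaceDir m) κ p := fun m => by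
    rw [← pt_eq_dirDeriv ((hΓ m).differentiable (by simp)), R5,
      ps_eq_dirDeriv m (hκ.differentiable (by simp))]
  have dκ := hκ.differentiable (by simp)
  have dA := (hA i j).differentiable (by simp)
  have hγ₂ : ContDiff ℝ 2 (γ i j) := (hγ i j).of_le (WithTop.coe_le_coe.2 le_top)
  have hφ₂ : ContDiff ℝ 2 φ := hφ.of_le (WithTop.coe_le_coe.2 le_top)
  simp (disch := fun_prop) only [dirDeriv_bssnQ hφ hΓ hγ, dirDeriv_comm hγ₂ timeDir,
    dirDeriv_comm hφ₂ timeDir, hφt, hγt, hΓt, dirDeriv_const_mul]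
  ring

theorem sum_dirDeriv_spaceDir_bssnQ {A : Fin 3 → Fin 3 → Spc → ℝ}
    (hφ : ContDiff ℝ ∞ φ) (hΓ : ∀ i, ContDiff ℝ ∞ (Γ i))
    (hγ : ∀ i j, ContDiff ℝ ∞ (γ i j)) (hA : ∀ i j, ContDiff ℝ ∞ (A i j))
    (R4 : ∀ i j p, pt (A i j) p =
      -(1/2) * lap (γ i j) p + (1/2) * (ps i (Γ j) p + ps j (Γ i) p) - 8 * ps i (ps j φ) p)
    (p : Spc) (i j : Fin 3) :
    ∑ l, dirDeriv (spaceDir l) (bssnQ φ Γ γ l i j) p = dirDeriv timeDir (A i j) p := by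
  have dφ := hφ.differentiable (by simp)
  have dφ' w := (hφ.dirDeriv w).differentiable (by simp)
  have dγ := (hγ i j).differentiable (by simp)
  have dγ' w := ((hγ i j).dirDeriv w).differentiable (by simp)
  have dΓ m := (hΓ m).differentiable (by simp)
  rw [← pt_eq_dirDeriv ((hA i j).differentiable (by simp)), R4, lap]
  simp (disch := fun_prop) only [ps_eq_dirDeriv, dirDeriv_bssnQ hφ hΓ hγ, Finset.sum_add_distrib,
    ← Finset.mul_sum, sum_kron_mul]
  rw [dirDeriv_comm (hφ.of_le (WithTop.coe_le_coe.2 le_top)) (spaceDir j) (spaceDir i)]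
  ring

end BssnQ

theorem reduced_energy_identity_A_Q_general
    (φ κ : Spc → ℝ) (Γ : Fin 3 → Spc → ℝ)
    (γ A : Fin 3 → Fin 3 → Spc → ℝ)
    (hφ : ContDiff ℝ (⊤ : ℕ∞) φ) (hκ : ContDiff ℝ (⊤ : ℕ∞) κ)
    (hΓ : ∀ i, ContDiff ℝ (⊤ : ℕ∞) (Γ i))
    (hγ : ∀ i j, ContDiff ℝ (⊤ : ℕ∞) (γ i j)) (hA : ∀ i j, ContDiff ℝ (⊤ : ℕ∞) (A i j))
    (R1 : ∀ p, pt φ p = -(1/6) * κ p)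
    (R3 : ∀ i j p, pt (γ i j) p = -2 * A i j p)
    (R4 : ∀ i j p, pt (A i j) p =
      -(1/2) * lap (γ i j) p + (1/2) * (ps i (Γ j) p + ps j (Γ i) p)
        - 8 * ps i (ps j φ) p)
    (R5 : ∀ i p, pt (Γ i) p = -(4/3) * ps i κ p)
    (Q : Fin 3 → Fin 3 → Fin 3 → Spc → ℝ)
    (hQ : ∀ l i j, Q l i j = fun q =>
      -(1/2) * ps l (γ i j) q
        + (1/2) * (kron l i * (Γ j q - 8 * ps j φ q)
          + kron l j * (Γ i q - 8 * ps i φ q))) :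
    ∀ p, pt (fun q => (1/2) * (∑ i, ∑ j, (A i j q)^2)
        + (1/2) * ∑ l, ∑ i, ∑ j, (Q l i j q)^2) p =
      ∑ l, ps l (fun q => ∑ i, ∑ j, Q l i j q * A i j q) p := by
  intro p
  obtain rfl : Q = bssnQ φ Γ γ := funext₃ hQ
  have dA i j := (hA i j).differentiable (by simp)
  have dQ l i j := (contDiff_bssnQ hφ hΓ hγ l i j).differentiable (by simp)
  rw [pt_eq_dirDeriv (by fun_prop)]
  simp (disch := fun_prop) only [ps_eq_dirDeriv]
  simpa only [Fintype.sum_prod_type] using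
    dirDeriv_energy_eq_sum_dirDeriv_flux (ι := Fin 3 × Fin 3) timeDir spaceDir
      (fun ij => dA ij.1 ij.2) (fun l ij => dQ l ij.1 ij.2) p
      (fun ij => (sum_dirDeriv_spaceDir_bssnQ hφ hΓ hγ hA R4 p ij.1 ij.2).symm)
      (fun l ij => dirDeriv_timeDir_bssnQ hφ hκ hΓ hγ hA R1 R3 R5 p l ij.1 ij.2)

/-- For the reduced linearized BSSN equations (R1), (R3), (R4), (R5), with
`Q_lij = −(1/2)∂_l γ̃_ij + (1/2)[δ_li(Γ_j − 8∂_j φ) + δ_lj(Γ_i − 8∂_i φ)]`, the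
energy density `(1/2)Σ A_ij² + (1/2)Σ Q_lij²` has time derivative equal to the
spatial divergence of the flux `Σ_ij Q_lij A_ij`. -/
theorem reduced_energy_identity_A_Q
    (φ κ : Spc → ℝ) (Γ : Fin 3 → Spc → ℝ)
    (γ A : Fin 3 → Fin 3 → Spc → ℝ)
    (hφ : ContDiff ℝ (⊤ : ℕ∞) φ) (hκ : ContDiff ℝ (⊤ : ℕ∞) κ)
    (hΓ : ∀ i, ContDiff ℝ (⊤ : ℕ∞) (Γ i))
    (hγ : ∀ i j, ContDiff ℝ (⊤ : ℕ∞) (γ i j)) (hA : ∀ i j, ContDiff ℝ (⊤ : ℕ∞) (A i j))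
    (hγsym : ∀ i j, γ i j = γ j i) (hAsym : ∀ i j, A i j = A j i)
    (R1 : ∀ p, pt φ p = -(1/6) * κ p)
    (R3 : ∀ i j p, pt (γ i j) p = -2 * A i j p)
    (R4 : ∀ i j p, pt (A i j) p =
      -(1/2) * lap (γ i j) p + (1/2) * (ps i (Γ j) p + ps j (Γ i) p)
        - 8 * ps i (ps j φ) p)
    (R5 : ∀ i p, pt (Γ i) p = -(4/3) * ps i κ p)
    (Q : Fin 3 → Fin 3 → Fin 3 → Spc → ℝ)
    (hQ : ∀ l i j, Q l i j = fun q =>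
      -(1/2) * ps l (γ i j) q
        + (1/2) * (kron l i * (Γ j q - 8 * ps j φ q)
          + kron l j * (Γ i q - 8 * ps i φ q))) :
    ∀ p, pt (fun q => (1/2) * (∑ i, ∑ j, (A i j q)^2)
        + (1/2) * ∑ l, ∑ i, ∑ j, (Q l i j q)^2) p =
      ∑ l, ps l (fun q => ∑ i, ∑ j, Q l i j q * A i j q) p :=
  reduced_energy_identity_A_Q_general φ κ Γ γ A hφ hκ hΓ hγ hA R1 R3 R4 R5 Q hQ
end
end
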